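/- Let n ≥ 2, let a > 0, b ∈ ℝ, t_1 < t_2 < … < t_{n-1} be reals, s_1, …, s_{n-1} > 0, and ζ_1, …, ζ_{n-1} ∈ ℍ. Define g(x) = ax + b - ∑_{k=1}^{n-1} s_k/(x - t_k), S(x) = ∏_{k=1}^{n-1} (x - t_k), and P(x) = ∏_{j=1}^{n-1} (x - ζ_j)(x - conj(ζ_j)). Then the following are equivalent: (i) S(x)²·g'(x) = a·P(x) for all real x distinct from t_1, …, t_{n-1} (i.e., g has critical points precisely ζ_1, …, ζ_{n-1} and their conjugates, with multiplicity); (ii) there exists a real polynomial R̃ of exact degree 2n-4 such that P·S'' - P'·S' + R̃·S = 0 and s_k = a·P(t_k)/∏_{j≠k}(t_k - t_j)² for every k = 1, …, n-1. -/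

import Mathlib

open Polynomial Finset Complex ComplexConjugate

/-!
Off the poles, `S² g' = a S² + ∑ₖ sₖ Sₖ²` with `Sₖ = S / (X - tₖ)`; call this polynomial `N`, so (i)
says `N = a P`. Since `P` and `S²` are monic of degree `2n - 2`, the polynomial `a P - N` has degree
`< deg S²`, so `N = a P` iff every `tₖ` is a double root of `a P - N`. At a node,
`N(tₖ) = sₖ Sₖ(tₖ)²`, `N'(tₖ) = 2 sₖ Sₖ(tₖ) Sₖ'(tₖ)`, `S'(tₖ) = Sₖ(tₖ)` and `S''(tₖ) = 2 Sₖ'(tₖ)`.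
Hence, once `N(tₖ) = a P(tₖ)` (the formula for `sₖ`), the condition `N'(tₖ) = a P'(tₖ)` is
equivalent to `(P S'' - P' S')(tₖ) = 0`, i.e. to `S ∣ P S'' - P' S'`. The quotient has degree
`2n - 4` automatically, because the leading coefficient of `P S'' - P' S'` is `-(n - 1) n ≠ 0`.
-/

namespace Polynomial

theorem sq_X_sub_C_dvd_iff {R : Type*} [CommRing R] {p : R[X]} {c : R} :
    (X - C c) ^ 2 ∣ p ↔ p.IsRoot c ∧ (derivative p).IsRoot c := by
  rcases eq_or_ne p 0 with rfl | hp
  · simp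
  rw [← le_rootMultiplicity_iff hp, ← one_lt_rootMultiplicity_iff_isRoot hp]
  rfl

theorem eq_iff_forall_eval_eq_of_ne {F ι : Type*} [Field F] [Infinite F] [Finite ι]
    {p q : F[X]} {t : ι → F} : (∀ u, (∀ k, u ≠ t k) → eval u p = eval u q) ↔ p = q := by
  refine ⟨fun h => eq_of_infinite_eval_eq p q ?_, fun h _ _ => h ▸ rfl⟩
  exact (Set.finite_range t).infinite_compl.mono fun u (hu : u ∉ Set.range t) =>
    h u fun k hk => hu ⟨k, hk.symm⟩

theorem natDegree_mul_derivative_derivative_sub {R : Type*} [CommRing R] [IsDomain R]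
    [CharZero R] {P S : R[X]} {p q : ℕ} (hP : P.Monic) (hPdeg : P.natDegree = p + 1)
    (hS : S.Monic) (hSdeg : S.natDegree = q + 1) (hpq : q ≠ p + 1) :
    (P * derivative (derivative S) - derivative P * derivative S).natDegree = p + q := by
  have hS'deg : (derivative S).natDegree ≤ q := by
    have := natDegree_derivative_le S; omega
  have hS'coeff : (derivative S).coeff q = q + 1 := by
    rw [coeff_derivative, ← hSdeg, hS.coeff_natDegree, one_mul]
  have hP'deg : (derivative P).natDegree ≤ p := by
    have := natDegree_derivative_le P; omega
  have hP'S' : (derivative P * derivative S).coeff (p + q) = (p + 1) * (q + 1) := by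
    rw [coeff_mul_add_eq_of_natDegree_le hP'deg hS'deg, coeff_derivative, ← hPdeg,
      hP.coeff_natDegree, one_mul, hS'coeff]
  have hPS'' : (P * derivative (derivative S)).natDegree ≤ p + q ∧
      (P * derivative (derivative S)).coeff (p + q) = (q + 1) * q := by
    rcases q with _ | q
    · have hS'' : derivative (derivative S) = 0 := by
        rw [eq_C_of_natDegree_eq_zero (Nat.le_zero.1 hS'deg), derivative_C]
      simp [hS'']
    · have hS''deg : (derivative (derivative S)).natDegree ≤ q := by
        have := natDegree_derivative_le (derivative S); omega
      rw [show p + (q + 1) = p + 1 + q by ring]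
      refine ⟨natDegree_mul_le_of_le hPdeg.le hS''deg, ?_⟩
      rw [coeff_mul_add_eq_of_natDegree_le hPdeg.le hS''deg, ← hPdeg, hP.coeff_natDegree,
        coeff_derivative, hS'coeff]
      push_cast; ring
  have hcoeff :
      (P * derivative (derivative S) - derivative P * derivative S).coeff (p + q) ≠ 0 := by
    rw [coeff_sub, hPS''.2, hP'S', show ((q : R) + 1) * q - (p + 1) * (q + 1) =
      (q + 1) * (q - (p + 1)) by ring]
    exact mul_ne_zero (Nat.cast_add_one_ne_zero q) (sub_ne_zero.2 (by exact_mod_cast hpq))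
  refine le_antisymm ((natDegree_sub_le_of_le hPS''.1 ?_).trans (max_self _).le)
    (le_natDegree_of_ne_zero hcoeff)
  exact natDegree_mul_le_of_le hP'deg hS'deg

theorem exists_degree_eq_and_add_mul_eq_zero_iff_dvd {R : Type*} [CommRing R] [Nontrivial R]
    {D S : R[X]} (hS : S.Monic) {d : ℕ} (hD : D.natDegree = d + S.natDegree) (hD0 : D ≠ 0) :
    (∃ Q : R[X], Q.degree = d ∧ D + Q * S = 0) ↔ S ∣ D := by
  refine ⟨fun ⟨Q, _, hQ⟩ => ⟨-Q, by linear_combination hQ⟩, fun ⟨Q, hQ⟩ => ⟨-Q, ?_, ?_⟩⟩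
  · have hQ0 : Q ≠ 0 := by rintro rfl; exact hD0 (by simpa using hQ)
    rw [hQ, hS.natDegree_mul' hQ0, add_comm] at hD
    rw [degree_neg, degree_eq_natDegree hQ0, Nat.add_right_cancel hD]
  · linear_combination hQ

end Polynomial

namespace Lagrange

section Field

variable {F ι : Type*} [Field F] {s : Finset ι} {v : ι → F}

theorem pairwise_isCoprime_X_sub_C (hvs : Set.InjOn v s) :
    (s : Set ι).Pairwise fun i j => IsCoprime (X - C (v i)) (X - C (v j)) :=
  fun _ hi _ hj hij =>
    isCoprime_X_sub_C_of_isUnit_sub (sub_ne_zero_of_ne fun h => hij (hvs hi hj h)).isUnit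

theorem nodal_dvd_iff (hvs : Set.InjOn v s) {p : F[X]} :
    nodal s v ∣ p ↔ ∀ i ∈ s, p.IsRoot (v i) :=
  ⟨fun h _ hi => dvd_iff_isRoot.1 ((X_sub_C_dvd_nodal v hi).trans h),
    fun h => prod_dvd_of_coprime (pairwise_isCoprime_X_sub_C hvs) fun i hi =>
      dvd_iff_isRoot.2 (h i hi)⟩

theorem nodal_sq_dvd_of_isRoot_derivative (hvs : Set.InjOn v s) {p : F[X]}
    (h : ∀ i ∈ s, p.IsRoot (v i) ∧ (derivative p).IsRoot (v i)) : nodal s v ^ 2 ∣ p := by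
  rw [nodal, ← prod_pow]
  exact prod_dvd_of_coprime (fun i hi j hj hij => (pairwise_isCoprime_X_sub_C hvs hi hj hij).pow)
    fun i hi => sq_X_sub_C_dvd_iff.2 (h i hi)

end Field

variable {R ι : Type*} [CommRing R] [DecidableEq ι] {s : Finset ι} {v : ι → R}

theorem eval_derivative_derivative_nodal_at_node {i : ι} (hi : i ∈ s) :
    eval (v i) (derivative (derivative (nodal s v))) =
      2 * eval (v i) (derivative (nodal (s.erase i) v)) := by
  rw [nodal_eq_mul_nodal_erase hi]
  simp only [derivative_mul, derivative_sub, derivative_X, derivative_C, sub_zero, one_mul,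
    derivative_add, zero_mul, eval_add, eval_mul, eval_sub, eval_X, eval_C, sub_self]
  ring

end Lagrange

open Lagrange

theorem Polynomial.monic_and_natDegree_eq_of_map_eq_prod {R A ι : Type*} [CommRing R]
    [CommRing A] [Nontrivial A] {f : R →+* A} (hf : Function.Injective f) {P : R[X]} {s : Finset ι}
    {z w : ι → A} (hP : P.map f = ∏ j ∈ s, (X - C (z j)) * (X - C (w j))) :
    P.Monic ∧ P.natDegree = 2 * #s := by
  rw [prod_mul_distrib, ← nodal, ← nodal] at hP
  have hmonic : (P.map f).Monic := hP ▸ nodal_monic.mul nodal_monic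
  refine ⟨hf.monic_map_iff.2 hmonic, ?_⟩
  rw [← natDegree_map_eq_of_injective hf, hP, nodal_monic.natDegree_mul nodal_monic,
    natDegree_nodal, natDegree_nodal, two_mul]

theorem hasDerivAt_linear_sub_sum_div {𝕜 ι : Type*} [NontriviallyNormedField 𝕜] [Fintype ι]
    (a b : 𝕜) (s t : ι → 𝕜) {u : 𝕜} (hu : ∀ k, u ≠ t k) :
    HasDerivAt (fun x => a * x + b - ∑ k, s k / (x - t k)) (a + ∑ k, s k / (u - t k) ^ 2) u := by
  have hsum : HasDerivAt (fun x => ∑ k, s k / (x - t k)) (∑ k, -(s k / (u - t k) ^ 2)) u :=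
    HasDerivAt.fun_sum fun k _ =>
      ((hasDerivAt_const u (s k)).div ((hasDerivAt_id u).sub_const (t k))
        (sub_ne_zero.2 (hu k))).congr_deriv (by simp [neg_div])
  exact ((((hasDerivAt_id u).const_mul a).add_const b).sub hsum).congr_deriv
    (by simp [sum_neg_distrib])

/-- At a node `tₖ`, with `c = Sₖ(tₖ)` and `d = Sₖ'(tₖ)`: given the residue relation, the double-root
condition `N'(tₖ) = a P'(tₖ)` is the Van Vleck equation `(P S'' - P' S')(tₖ) = 0`. -/
theorem two_mul_mul_eq_iff_of_mul_sq_eq {K : Type*} [Field K] {a s c d p p' : K} (ha : a ≠ 0)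
    (hc : c ≠ 0) (h : s * c ^ 2 = a * p) :
    2 * s * c * d = a * p' ↔ p * (2 * d) - p' * c = 0 := by
  constructor
  · intro h'
    refine mul_left_cancel₀ ha ?_
    linear_combination (-2 * d) * h + c * h'
  · intro h'
    refine mul_left_cancel₀ hc ?_
    linear_combination (2 * d) * h + a * h'

section DerivNumerator

variable {F ι : Type*} [Field F] [Fintype ι] [DecidableEq ι]

/-- The polynomial `S² g'` for `S = nodal univ t` and `g x = a x + b - ∑ k, s k / (x - t k)`. -/
noncomputable def derivNumerator (a : F) (s t : ι → F) : F[X] :=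
  C a * nodal univ t ^ 2 + ∑ k, C (s k) * nodal (univ.erase k) t ^ 2

theorem eval_derivNumerator (a : F) (s : ι → F) {t : ι → F} {u : F} (hu : ∀ k, u ≠ t k) :
    eval u (derivNumerator a s t) =
      eval u (nodal univ t) ^ 2 * (a + ∑ k, s k / (u - t k) ^ 2) := by
  simp only [derivNumerator, eval_add, eval_mul, eval_C, eval_pow, eval_finsetSum, mul_add,
    mul_sum, mul_comm a]
  congr 1
  refine sum_congr rfl fun k _ => ?_
  rw [nodal_eq_mul_nodal_erase (mem_univ k), eval_mul, eval_sub, eval_X, eval_C]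
  field_simp [sub_ne_zero.2 (hu k)]

theorem sq_X_sub_C_dvd_derivNumerator_sub (a : F) (s t : ι → F) (k : ι) :
    (X - C (t k)) ^ 2 ∣ derivNumerator a s t - C (s k) * nodal (univ.erase k) t ^ 2 := by
  rw [derivNumerator, ← add_sum_erase _ _ (mem_univ k), add_sub_assoc, add_sub_cancel_left]
  have hdvd : ∀ {i : Finset ι}, k ∈ i → (X - C (t k)) ^ 2 ∣ nodal i t ^ 2 :=
    fun hk => pow_dvd_pow_of_dvd (X_sub_C_dvd_nodal t hk) 2
  exact dvd_add (dvd_mul_of_dvd_right (hdvd (mem_univ k)) _) (dvd_sum fun j hj =>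
    dvd_mul_of_dvd_right (hdvd (mem_erase.2 ⟨(ne_of_mem_erase hj).symm, mem_univ k⟩)) _)

theorem eval_derivNumerator_at_node (a : F) (s t : ι → F) (k : ι) :
    eval (t k) (derivNumerator a s t) = s k * eval (t k) (nodal (univ.erase k) t) ^ 2 := by
  have h := (sq_X_sub_C_dvd_iff.1 (sq_X_sub_C_dvd_derivNumerator_sub a s t k)).1
  rw [IsRoot, eval_sub, sub_eq_zero] at h
  simp [h]

theorem eval_derivative_derivNumerator_at_node (a : F) (s t : ι → F) (k : ι) :
    eval (t k) (derivative (derivNumerator a s t)) =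
      2 * s k * eval (t k) (nodal (univ.erase k) t) *
        eval (t k) (derivative (nodal (univ.erase k) t)) := by
  have h := (sq_X_sub_C_dvd_iff.1 (sq_X_sub_C_dvd_derivNumerator_sub a s t k)).2
  rw [IsRoot, derivative_sub, eval_sub, sub_eq_zero] at h
  simp only [h, derivative_mul, derivative_C, zero_mul, derivative_sq, zero_add, eval_mul,
    eval_C]
  ring

theorem degree_C_mul_sub_derivNumerator_lt (a : F) (s t : ι → F) {P : F[X]} (hP : P.Monic)
    (hPdeg : P.natDegree = 2 * Fintype.card ι) :
    (C a * P - derivNumerator a s t).degree < (nodal univ t ^ 2).degree := by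
  have hS2 : (nodal univ t ^ 2).Monic := nodal_monic.pow 2
  have hS2deg : (nodal univ t ^ 2).natDegree = 2 * Fintype.card ι := by
    rw [natDegree_pow, natDegree_nodal, card_univ, mul_comm]
  have hsplit : C a * P - derivNumerator a s t =
      a • (P - nodal univ t ^ 2) - ∑ k, C (s k) * nodal (univ.erase k) t ^ 2 := by
    rw [derivNumerator, smul_eq_C_mul]; ring
  rw [hsplit]
  refine (degree_sub_le _ _).trans_lt (max_lt ?_ ?_)
  · refine (degree_smul_le _ _).trans_lt (degree_sub_lt_right ?_ hS2.ne_zero ?_)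
    · rw [degree_eq_natDegree hP.ne_zero, degree_eq_natDegree hS2.ne_zero, hPdeg, hS2deg]
    · rw [hP.leadingCoeff, hS2.leadingCoeff]
  refine (degree_sum_le _ _).trans_lt ((Finset.sup_lt_iff ?_).2 fun k _ => degree_lt_degree ?_)
  · exact bot_lt_iff_ne_bot.2 (mt degree_eq_bot.1 hS2.ne_zero)
  · have := Fintype.card_pos_iff.2 ⟨k⟩
    refine (natDegree_C_mul_le _ _).trans_lt ?_
    rw [natDegree_pow, natDegree_nodal, card_erase_of_mem (mem_univ k), card_univ, hS2deg]
    omega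

theorem derivNumerator_eq_C_mul_iff {a : F} {s t : ι → F} (ht : Function.Injective t)
    {P : F[X]} (hP : P.Monic) (hPdeg : P.natDegree = 2 * Fintype.card ι) :
    derivNumerator a s t = C a * P ↔ ∀ k, eval (t k) (derivNumerator a s t) = a * eval (t k) P ∧
      eval (t k) (derivative (derivNumerator a s t)) = a * eval (t k) (derivative P) := by
  refine ⟨fun h k => by simp [h], fun h => (sub_eq_zero.1 ?_).symm⟩
  refine eq_zero_of_dvd_of_degree_lt (nodal_sq_dvd_of_isRoot_derivative ht.injOn fun k _ => ?_)
    (degree_C_mul_sub_derivNumerator_lt a s t hP hPdeg)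
  simp [IsRoot, (h k).1, (h k).2]

theorem derivNumerator_eq_C_mul_iff_dvd {a : F} (ha : a ≠ 0) {s t : ι → F}
    (ht : Function.Injective t) {P : F[X]} (hP : P.Monic)
    (hPdeg : P.natDegree = 2 * Fintype.card ι) :
    derivNumerator a s t = C a * P ↔
      (∀ k, s k * eval (t k) (nodal (univ.erase k) t) ^ 2 = a * eval (t k) P) ∧
      nodal univ t ∣
        P * derivative (derivative (nodal univ t)) - derivative P * derivative (nodal univ t) := by
  rw [derivNumerator_eq_C_mul_iff ht hP hPdeg, nodal_dvd_iff ht.injOn]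
  simp only [mem_univ, true_implies, ← forall_and]
  refine forall_congr' fun k => ?_
  rw [eval_derivNumerator_at_node, eval_derivative_derivNumerator_at_node, IsRoot, eval_sub,
    eval_mul, eval_mul, eval_nodal_derivative_eval_node_eq (mem_univ k),
    eval_derivative_derivative_nodal_at_node (mem_univ k)]
  exact and_congr_right (two_mul_mul_eq_iff_of_mul_sq_eq ha
    (eval_nodal_not_at_node fun j hj => ht.ne (ne_of_mem_erase hj).symm))

end DerivNumerator

theorem critical_points_iff_van_vleck'_general
    (n : ℕ) (hn : 2 ≤ n) (a b : ℝ) (ha : 0 < a)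
    (t : Fin (n - 1) → ℝ) (ht : StrictMono t)
    (s : Fin (n - 1) → ℝ)
    (ζ : Fin (n - 1) → ℂ)
    (g : ℝ → ℝ) (hg : g = fun u => a * u + b - ∑ k, s k / (u - t k))
    (S : Polynomial ℝ) (hS : S = ∏ k, (X - C (t k)))
    (P : Polynomial ℝ)
    (hP : P.map (algebraMap ℝ ℂ) = ∏ j, (X - C (ζ j)) * (X - C (conj (ζ j)))) :
    (∀ u : ℝ, (∀ k, u ≠ t k) →
        (S.eval u) ^ 2 * deriv g u = a * P.eval u)
    ↔
    (∃ R : Polynomial ℝ, R.degree = (2 * n - 4 : ℕ) ∧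
      P * derivative (derivative S) - derivative P * derivative S + R * S = 0 ∧
      ∀ k, s k = a * P.eval (t k) / ∏ j ∈ Finset.univ.erase k, (t k - t j) ^ 2) := by
  obtain ⟨m, rfl⟩ : ∃ m, n = m + 2 := ⟨n - 2, by omega⟩
  obtain rfl : S = nodal univ t := hS
  obtain ⟨hPm, hPdeg⟩ := monic_and_natDegree_eq_of_map_eq_prod (algebraMap ℝ ℂ).injective hP
  rw [card_univ] at hPdeg
  have hD : (P * derivative (derivative (nodal univ t)) -
      derivative P * derivative (nodal univ t)).natDegree = 2 * m + 1 + m :=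
    natDegree_mul_derivative_derivative_sub hPm (by rw [hPdeg, Fintype.card_fin]; omega)
      nodal_monic (by simp) (by omega)
  have hresidue : ∀ k, s k = a * P.eval (t k) / ∏ j ∈ univ.erase k, (t k - t j) ^ 2 ↔
      s k * eval (t k) (nodal (univ.erase k) t) ^ 2 = a * eval (t k) P := fun k => by
    rw [eval_nodal, ← prod_pow, eq_div_iff (prod_ne_zero_iff.2 fun j hj =>
      pow_ne_zero 2 (sub_ne_zero.2 (ht.injective.ne (ne_of_mem_erase hj).symm)))]
  calc (∀ u, (∀ k, u ≠ t k) → eval u (nodal univ t) ^ 2 * deriv g u = a * eval u P)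
      ↔ ∀ u, (∀ k, u ≠ t k) → eval u (derivNumerator a s t) = eval u (C a * P) := by
        refine forall₂_congr fun u hu => ?_
        rw [hg, (hasDerivAt_linear_sub_sum_div a b s t hu).deriv, eval_derivNumerator a s hu,
          eval_mul, eval_C]
    _ ↔ derivNumerator a s t = C a * P := eq_iff_forall_eval_eq_of_ne
    _ ↔ _ := by
      rw [derivNumerator_eq_C_mul_iff_dvd ha.ne' ht.injective hPm hPdeg,
        ← exists_degree_eq_and_add_mul_eq_zero_iff_dvd nodal_monic (d := 2 * (m + 2) - 4)
          (by rw [hD, natDegree_nodal, card_univ, Fintype.card_fin]; omega)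
          (fun h => by rw [h, natDegree_zero] at hD; omega)]
      simp_rw [hresidue, ← and_assoc, exists_and_right, and_comm]

/-- **Lemma 4.** Let `g(x) = a·x + b - ∑ s k/(x - t k)` with `a > 0`, ordered real poles
`t 1 < … < t (n-1)` and positive residues, let `S(x) = ∏ (x - t k)`, and let `P` be the
real polynomial with complex factorization `P(x) = ∏ (x - ζ j)(x - conj (ζ j))`, where
the `ζ j` lie in the upper half-plane. Then `g` has critical points precisely the `ζ j`
and their conjugates (i.e. `S(x)²·g'(x) = a·P(x)` off the poles) if and only if there is
a real polynomial `R̃` of exact degree `2n-4` with `P·S'' - P'·S' + R̃·S = 0` and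
`s k = a·P(t k)/∏_{j≠k}(t k - t j)²` for all `k`. -/
theorem critical_points_iff_van_vleck'
    (n : ℕ) (hn : 2 ≤ n) (a b : ℝ) (ha : 0 < a)
    (t : Fin (n - 1) → ℝ) (ht : StrictMono t)
    (s : Fin (n - 1) → ℝ) (hs : ∀ k, 0 < s k)
    (ζ : Fin (n - 1) → ℂ) (hζ : ∀ j, 0 < (ζ j).im)
    (g : ℝ → ℝ) (hg : g = fun u => a * u + b - ∑ k, s k / (u - t k))
    (S : Polynomial ℝ) (hS : S = ∏ k, (X - C (t k)))
    (P : Polynomial ℝ)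
    (hP : P.map (algebraMap ℝ ℂ) = ∏ j, (X - C (ζ j)) * (X - C (conj (ζ j)))) :
    (∀ u : ℝ, (∀ k, u ≠ t k) →
        (S.eval u) ^ 2 * deriv g u = a * P.eval u)
    ↔
    (∃ R : Polynomial ℝ, R.degree = (2 * n - 4 : ℕ) ∧
      P * derivative (derivative S) - derivative P * derivative S + R * S = 0 ∧
      ∀ k, s k = a * P.eval (t k) / ∏ j ∈ Finset.univ.erase k, (t k - t j) ^ 2) :=
  critical_points_iff_van_vleck'_general n hn a b ha t ht s ζ g hg S hS P hP
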